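/- Let σ(z) = max{0,z} and let φ : ℝ → ℝ be Telgarsky's triangle function φ(z) = σ(σ(2z) − σ(4z − 2)). Fix a positive integer m and for ℓ ∈ {1,…,m} define ψ_ℓ(x) = 2^{m+2−ℓ} · σ( φ^{(ℓ)}(x/2^m + 2^{−(m+2)}) − φ^{(ℓ)}(x/2^m + 2^{−(m+1)}) ), where φ^{(ℓ)} denotes the ℓ-fold composition of φ with itself. Then for every x ∈ ℕ with x < 2^m and every ℓ ∈ {1,…,m}, ψ_ℓ(x) = ⌊x / 2^{m−ℓ}⌋ mod 2, i.e. ψ_ℓ(x) equals the ℓ-th most significant bit of the m-bit binary representation of x. -/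

import Mathlib

open scoped BigOperators

noncomputable section

/-- The ReLU activation function. -/
def relu (x : ℝ) : ℝ := max 0 x

/-- One affine layer of a neural network: a weight matrix and a bias vector. -/
structure Layer (nin nout : ℕ) where
  W : Matrix (Fin nout) (Fin nin) ℝ
  b : Fin nout → ℝ

/-- The affine map computed by a layer. -/
def Layer.affine {nin nout : ℕ} (l : Layer nin nout) (x : Fin nin → ℝ) : Fin nout → ℝ :=
  fun i => (∑ j, l.W i j * x j) + l.b i

/-- A ReLU network: a nonempty sequence of affine layers; ReLU is applied after
every layer except the last one. -/
inductive Net : ℕ → ℕ → Type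
  | last {nin nout : ℕ} : Layer nin nout → Net nin nout
  | cons {nin k nout : ℕ} : Layer nin k → Net k nout → Net nin nout

namespace Net

/-- Evaluation of a ReLU network. -/
def eval : {nin nout : ℕ} → Net nin nout → (Fin nin → ℝ) → (Fin nout → ℝ)
  | _, _, .last l, x => l.affine x
  | _, _, .cons l rest, x => rest.eval (fun i => relu (l.affine x i))

/-- The depth (number of layers) of a network. -/
def depth : {nin nout : ℕ} → Net nin nout → ℕ
  | _, _, .last _ => 1
  | _, _, .cons _ rest => rest.depth + 1

/-- The width of a network: the maximum of the input dimension and all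
intermediate layer dimensions. -/
def width : {nin nout : ℕ} → Net nin nout → ℕ
  | nin, _, .last _ => nin
  | nin, _, .cons _ rest => max nin rest.width

/-- The number of parameters of a network: the total number of entries of all
weight matrices and bias vectors. -/
def params : {nin nout : ℕ} → Net nin nout → ℕ
  | nin, nout, .last _ => nout * nin + nout
  | nin, _, .cons (k := k) _ rest => (k * nin + k) + rest.params

/-- All weights (matrix entries and biases) of the network lie in the set `s`. -/
def weightsIn (s : Set ℝ) : {nin nout : ℕ} → Net nin nout → Prop
  | _, _, .last l => (∀ i j, l.W i j ∈ s) ∧ (∀ i, l.b i ∈ s)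
  | _, _, .cons l rest => ((∀ i j, l.W i j ∈ s) ∧ (∀ i, l.b i ∈ s)) ∧ rest.weightsIn s

/-- The bias vector of the output layer of a network. -/
def lastBias : {nin nout : ℕ} → Net nin nout → (Fin nout → ℝ)
  | _, _, .last l => l.b
  | _, _, .cons _ rest => rest.lastBias

end Net

/-- `BIN a b m` is the integer formed by bits `a` through `b` (1-indexed from the
least significant bit) of the binary representation of `m`. -/
def BIN (a b m : ℕ) : ℕ := (m / 2^(a-1)) % 2^(b - a + 1)

end


/-- Telgarsky's triangle function. -/
noncomputable def tri (z : ℝ) : ℝ := relu (relu (2 * z) - relu (4 * z - 2))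

/-- The bit-extraction gadget built from Telgarsky's triangle function. -/
noncomputable def psi (m ℓ : ℕ) (x : ℝ) : ℝ :=
  2^(m + 2 - ℓ) *
    relu (tri^[ℓ] (x / 2^m + ((2 : ℝ)^(m + 2))⁻¹) - tri^[ℓ] (x / 2^m + ((2 : ℝ)^(m + 1))⁻¹))

noncomputable def saw (t : ℝ) : ℝ := min (Int.fract t) (1 - Int.fract t)

lemma saw_nonneg (t : ℝ) : 0 ≤ saw t :=
  le_min (Int.fract_nonneg t) (by linarith [Int.fract_lt_one t])

lemma saw_le_half (t : ℝ) : saw t ≤ 1/2 := by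
  rcases le_or_gt (Int.fract t) (1/2) with h | h
  · exact le_trans (min_le_left _ _) h
  · exact le_trans (min_le_right _ _) (by linarith)

lemma saw_int_add (n : ℤ) (t : ℝ) : saw ((n : ℝ) + t) = saw t := by
  simp [saw, Int.fract_intCast_add]

lemma saw_lower {t : ℝ} (h0 : 0 ≤ t) (h1 : t ≤ 1/2) : saw t = t := by
  have hf : Int.fract t = t := Int.fract_eq_self.2 ⟨h0, by linarith⟩
  rw [saw, hf]; exact min_eq_left (by linarith)

lemma saw_upper {t : ℝ} (h0 : 1/2 ≤ t) (h1 : t < 1) : saw t = 1 - t := by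
  have hf : Int.fract t = t := Int.fract_eq_self.2 ⟨by linarith, h1⟩
  rw [saw, hf]; exact min_eq_right (by linarith)

lemma tri_eq {t : ℝ} (h0 : 0 ≤ t) (h1 : t ≤ 1) : tri t = 2 * saw t := by
  rcases lt_or_eq_of_le h1 with h1' | h1'
  · rcases le_or_gt t (1/2) with h | h
    · have h2 : max 0 (2*t) = 2*t := max_eq_right (by linarith)
      have h4 : max 0 (4*t-2) = 0 := max_eq_left (by linarith)
      simp only [tri, relu, h2, h4, sub_zero]
      rw [saw_lower h0 h]
    · have h2 : max 0 (2*t) = 2*t := max_eq_right (by linarith)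
      have h4 : max 0 (4*t-2) = 4*t-2 := max_eq_right (by linarith)
      simp only [tri, relu, h2, h4]
      rw [saw_upper (by linarith) h1', max_eq_right (by linarith)]
      ring
  · subst h1'
    simp only [tri, relu]
    rw [saw, Int.fract_one]
    norm_num

lemma saw_two_saw (u : ℝ) : saw (2 * saw u) = saw (2 * u) := by
  have hu : u = (⌊u⌋ : ℝ) + Int.fract u := (Int.floor_add_fract u).symm
  set f := Int.fract u with hf
  have hf0 : 0 ≤ f := Int.fract_nonneg u
  have hf1 : f < 1 := Int.fract_lt_one u
  have h2u : saw (2 * u) = saw (2 * f) := by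
    have : 2 * u = ((2 * ⌊u⌋ : ℤ) : ℝ) + 2 * f := by push_cast; nlinarith [hu]
    rw [this, saw_int_add]
  rw [h2u]
  have hsu : saw u = min f (1 - f) := by rw [saw, ← hf]
  rcases le_or_gt f (1/2) with h | h
  · rw [hsu, min_eq_left (by linarith)]
  · rw [hsu, min_eq_right (by linarith)]
    have e1 : saw (2 * (1 - f)) = min (2 - 2*f) (2*f - 1) := by
      rw [show (2 : ℝ) * (1 - f) = 2 - 2*f by ring, saw,
        Int.fract_eq_self.2 ⟨by linarith, by linarith⟩]
      congr 1
      ring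
    have e2 : saw (2 * f) = min (2*f - 1) (2 - 2*f) := by
      have hf2 : Int.fract (2 * f) = 2*f - 1 := by
        rw [show (2:ℝ) * f = ((1 : ℤ) : ℝ) + (2*f - 1) by push_cast; ring,
          Int.fract_intCast_add, Int.fract_eq_self.2 ⟨by linarith, by linarith⟩]
        push_cast
        ring
      rw [saw, hf2]
      congr 1
      ring
    rw [e1, e2, min_comm]

lemma tri_iter (ℓ : ℕ) (hℓ : 1 ≤ ℓ) {t : ℝ} (h0 : 0 ≤ t) (h1 : t ≤ 1) :
    tri^[ℓ] t = 2 * saw (2^(ℓ-1) * t) := by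
  induction ℓ with
  | zero => omega
  | succ n ih =>
    rcases Nat.eq_zero_or_pos n with hn | hn
    · subst hn
      simp [tri_eq h0 h1]
    · rw [Function.iterate_succ_apply', ih hn]
      have hs0 : (0:ℝ) ≤ 2 * saw (2^(n-1) * t) := by linarith [saw_nonneg (2^(n-1) * t)]
      have hs1 : 2 * saw (2^(n-1) * t) ≤ 1 := by linarith [saw_le_half (2^(n-1) * t)]
      rw [tri_eq hs0 hs1, saw_two_saw]
      congr 2
      rw [show n + 1 - 1 = n from rfl, show (2:ℝ)^n = 2 * 2^(n-1) by
        rw [← pow_succ']; congr 1; omega]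
      ring

theorem stmt12 (m : ℕ) (hm : 0 < m) (x : ℕ) (hx : x < 2^m)
    (ℓ : ℕ) (h1 : 1 ≤ ℓ) (h2 : ℓ ≤ m) :
    psi m ℓ (x : ℝ) = ((x / 2^(m - ℓ)) % 2 : ℕ) := by
  set k := m - ℓ with hk
  have h2m : (0:ℝ) < 2^m := by positivity
  have h2k : (0:ℝ) < 2^k := by positivity
  have hx1 : (x:ℝ) + 1 ≤ 2^m := by exact_mod_cast hx
  -- argument bounds
  have ha0 : (0:ℝ) ≤ (x:ℝ)/2^m + ((2:ℝ)^(m+2))⁻¹ := by positivity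
  have hb0 : (0:ℝ) ≤ (x:ℝ)/2^m + ((2:ℝ)^(m+1))⁻¹ := by positivity
  have hm2 : (2:ℝ)^(m+2) = 2^m * 4 := by rw [pow_add]; norm_num
  have hm1 : (2:ℝ)^(m+1) = 2^m * 2 := by rw [pow_add]; norm_num
  have ha1 : (x:ℝ)/2^m + ((2:ℝ)^(m+2))⁻¹ ≤ 1 := by
    rw [hm2, show (x:ℝ)/2^m + ((2:ℝ)^m * 4)⁻¹ = (4*x+1)/(2^m*4) by field_simp,
      div_le_one (by positivity)]
    linarith
  have hb1 : (x:ℝ)/2^m + ((2:ℝ)^(m+1))⁻¹ ≤ 1 := by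
    rw [hm1, show (x:ℝ)/2^m + ((2:ℝ)^m * 2)⁻¹ = (2*x+1)/(2^m*2) by field_simp,
      div_le_one (by positivity)]
    linarith
  have key : ∀ c : ℕ, 2^(ℓ-1) * ((x:ℝ)/2^m + ((2:ℝ)^(m+c))⁻¹)
      = (x:ℝ)/2^(k+1) + ((2:ℝ)^(k+1+c))⁻¹ := by
    intro c
    have e1 : (2:ℝ)^m = 2^(ℓ-1) * 2^(k+1) := by rw [← pow_add]; congr 1; omega
    have e2 : (2:ℝ)^(m+c) = 2^(ℓ-1) * 2^(k+1+c) := by rw [← pow_add]; congr 1; omega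
    rw [e1, e2]
    field_simp
  set q := x / 2^(k+1) with hq
  set r := x % 2^(k+1) with hr
  have hqr : 2^(k+1) * q + r = x := Nat.div_add_mod x (2^(k+1))
  have hrlt : r < 2^(k+1) := Nat.mod_lt _ (by positivity)
  have hX : ∀ ε:ℝ, saw ((x:ℝ)/2^(k+1) + ε) = saw ((r:ℝ)/2^(k+1) + ε) := by
    intro ε
    have hcast : (x:ℝ) = 2^(k+1) * q + r := by exact_mod_cast hqr.symm
    have : (x:ℝ)/2^(k+1) + ε = ((q:ℤ) : ℝ) + ((r:ℝ)/2^(k+1) + ε) := by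
      rw [hcast]; push_cast; field_simp; ring
    rw [this, saw_int_add]
  have hbit : x / 2^k % 2 = r / 2^k := by
    rw [hr, pow_succ, Nat.mod_mul_right_div_self]
  rw [psi, tri_iter ℓ h1 ha0 ha1, tri_iter ℓ h1 hb0 hb1, key 2, key 1, hX, hX,
    show m + 2 - ℓ = k + 2 by omega, show k+1+2 = k+3 by omega, show k+1+1 = k+2 by omega, hbit]
  have hk1 : (2:ℝ)^(k+1) = 2^k * 2 := by rw [pow_add]; norm_num
  have hk2 : (2:ℝ)^(k+2) = 2^k * 4 := by rw [pow_add]; norm_num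
  have hk3 : (2:ℝ)^(k+3) = 2^k * 8 := by rw [pow_add]; norm_num
  rcases lt_or_ge r (2^k) with hcase | hcase
  · -- bit is 0
    have hrR : (r:ℝ) + 1 ≤ 2^k := by exact_mod_cast hcase
    have hu1 : saw ((r:ℝ)/2^(k+1) + ((2:ℝ)^(k+3))⁻¹)
        = (r:ℝ)/2^(k+1) + ((2:ℝ)^(k+3))⁻¹ := by
      apply saw_lower (by positivity)
      rw [hk1, hk3, show (r:ℝ)/(2^k*2) + ((2:ℝ)^k*8)⁻¹ = (4*r+1)/(2^k*8) by field_simp; ring,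
        div_le_div_iff₀ (by positivity) (by norm_num)]
      linarith
    have hu2 : saw ((r:ℝ)/2^(k+1) + ((2:ℝ)^(k+2))⁻¹)
        = (r:ℝ)/2^(k+1) + ((2:ℝ)^(k+2))⁻¹ := by
      apply saw_lower (by positivity)
      rw [hk1, hk2, show (r:ℝ)/(2^k*2) + ((2:ℝ)^k*4)⁻¹ = (2*r+1)/(2^k*4) by field_simp; ring,
        div_le_div_iff₀ (by positivity) (by norm_num)]
      linarith
    rw [hu1, hu2, Nat.div_eq_of_lt hcase]
    have hneg : 2 * ((r:ℝ)/2^(k+1) + ((2:ℝ)^(k+3))⁻¹)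
        - 2 * ((r:ℝ)/2^(k+1) + ((2:ℝ)^(k+2))⁻¹) ≤ 0 := by
      rw [hk2, hk3]
      have : ((2:ℝ)^k*8)⁻¹ ≤ ((2:ℝ)^k*4)⁻¹ := by
        apply inv_anti₀ (by positivity); nlinarith
      linarith
    rw [relu, max_eq_left hneg]
    norm_num
  · -- bit is 1
    have hrR : (2:ℝ)^k ≤ r := by exact_mod_cast hcase
    have hrR2 : (r:ℝ) + 1 ≤ 2^k * 2 := by
      have : (r:ℝ) + 1 ≤ 2^(k+1) := by exact_mod_cast hrlt
      rwa [hk1] at this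
    have hu1 : saw ((r:ℝ)/2^(k+1) + ((2:ℝ)^(k+3))⁻¹)
        = 1 - ((r:ℝ)/2^(k+1) + ((2:ℝ)^(k+3))⁻¹) := by
      apply saw_upper
      · rw [hk1, hk3, show (r:ℝ)/(2^k*2) + ((2:ℝ)^k*8)⁻¹ = (4*r+1)/(2^k*8) by field_simp; ring,
          le_div_iff₀ (by positivity)]
        linarith
      · rw [hk1, hk3, show (r:ℝ)/(2^k*2) + ((2:ℝ)^k*8)⁻¹ = (4*r+1)/(2^k*8) by field_simp; ring,
          div_lt_one (by positivity)]
        linarith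
    have hu2 : saw ((r:ℝ)/2^(k+1) + ((2:ℝ)^(k+2))⁻¹)
        = 1 - ((r:ℝ)/2^(k+1) + ((2:ℝ)^(k+2))⁻¹) := by
      apply saw_upper
      · rw [hk1, hk2, show (r:ℝ)/(2^k*2) + ((2:ℝ)^k*4)⁻¹ = (2*r+1)/(2^k*4) by field_simp; ring,
          le_div_iff₀ (by positivity)]
        linarith
      · rw [hk1, hk2, show (r:ℝ)/(2^k*2) + ((2:ℝ)^k*4)⁻¹ = (2*r+1)/(2^k*4) by field_simp; ring,
          div_lt_one (by positivity)]
        linarith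
    have hdiv : r / 2^k = 1 := by
      apply Nat.div_eq_of_lt_le
      · simpa using hcase
      · rw [pow_succ] at hrlt; omega
    rw [hu1, hu2, hdiv]
    have heq : 2 * (1 - ((r:ℝ)/2^(k+1) + ((2:ℝ)^(k+3))⁻¹))
        - 2 * (1 - ((r:ℝ)/2^(k+1) + ((2:ℝ)^(k+2))⁻¹)) = ((2:ℝ)^(k+2))⁻¹ := by
      rw [hk2, hk3]; field_simp; ring
    rw [heq, relu, max_eq_right (by positivity)]
    rw [mul_inv_cancel₀ (by positivity)]
    norm_num
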